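/- arXiv:2509.13596 — 2 statements merged into one kernel-verified Lean document; each statement's English description precedes it below -/
import Mathlib

section
/- For every integer N ≥ 8, the cubic polynomial G_N(p) = 4p³ + (2N−8)p² − N²p + N² has exactly one root p₀(N) in the open interval (N/(N−2), (2N−2)/N), and G_N(p) < 0 precisely for p₀(N) < p < (2N−2)/N within that interval. -/
/-!
`G_N` is convex on `p ≥ 0` (its second derivative `24p + 4N - 16` is positive), positive at
`N/(N-2)` and negative at `(2N-2)/N`. A convex function that is positive at the left end of an
interval and negative at the right end vanishes at exactly one interior point and is negative
exactly to its right: once it is `≤ 0` somewhere, convexity against the negative right endpoint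
keeps it negative from there on.
-/

open Set

theorem ConvexOn.neg_of_nonpos_of_neg {f : ℝ → ℝ} {s : Set ℝ} (hf : ConvexOn ℝ s f)
    {x y z : ℝ} (hx : x ∈ s) (hz : z ∈ s) (hxy : x < y) (hyz : y ≤ z) (hfx : f x ≤ 0)
    (hfz : f z < 0) : f y < 0 := by
  rcases hyz.eq_or_lt with rfl | hyz
  · exact hfz
  by_contra! hfy
  have hslope := hf.slope_mono_adjacent hx hz hxy hyz
  have hleft : 0 ≤ (f y - f x) / (y - x) := div_nonneg (by linarith) (by linarith)
  have hright : (f z - f y) / (z - y) < 0 := div_neg_of_neg_of_pos (by linarith) (by linarith)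
  linarith

theorem ConvexOn.exists_zero_Ioo_neg_iff_lt {f : ℝ → ℝ} {a b : ℝ}
    (hf : ConvexOn ℝ (Icc a b) f) (hc : ContinuousOn f (Icc a b)) (hab : a ≤ b)
    (ha : 0 < f a) (hb : f b < 0) :
    ∃ p₀ ∈ Ioo a b, (∀ p ∈ Ioo a b, f p = 0 ↔ p = p₀) ∧ (∀ p ∈ Ioo a b, f p < 0 ↔ p₀ < p) := by
  obtain ⟨p₀, hp₀, hfp₀⟩ := intermediate_value_Ioo' hab hc ⟨hb, ha⟩
  have hneg : ∀ p ∈ Ioo a b, p₀ < p → f p < 0 := fun p hp h ↦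
    hf.neg_of_nonpos_of_neg (Ioo_subset_Icc_self hp₀) (right_mem_Icc.2 hab) h hp.2.le
      hfp₀.le hb
  have hpos : ∀ p ∈ Ioo a b, p < p₀ → 0 < f p := fun p hp h ↦ by
    by_contra! hfp
    exact (hf.neg_of_nonpos_of_neg (Ioo_subset_Icc_self hp) (right_mem_Icc.2 hab) h
      hp₀.2.le hfp hb).ne hfp₀
  refine ⟨p₀, hp₀, fun p hp ↦ ⟨fun hfp ↦ ?_, ?_⟩, fun p hp ↦ ⟨fun hfp ↦ ?_, hneg p hp⟩⟩
  · rcases lt_trichotomy p p₀ with h | h | h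
    · exact absurd hfp (hpos p hp h).ne'
    · exact h
    · exact absurd hfp (hneg p hp h).ne
  · rintro rfl
    exact hfp₀
  · by_contra! h
    rcases h.eq_or_lt with rfl | h
    · exact hfp.ne hfp₀
    · exact (hpos p hp h).not_gt hfp

noncomputable def cubicG (n p : ℝ) : ℝ := 4 * p ^ 3 + (2 * n - 8) * p ^ 2 - n ^ 2 * p + n ^ 2

theorem continuous_cubicG (n : ℝ) : Continuous (cubicG n) := by
  unfold cubicG
  fun_prop

theorem convexOn_cubicG {n : ℝ} (hn : 4 ≤ n) : ConvexOn ℝ (Ici 0) (cubicG n) := by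
  have hcubic := (convexOn_pow 3).smul (by norm_num : (0 : ℝ) ≤ 4)
  have hquad := (convexOn_pow 2).smul (by linarith : (0 : ℝ) ≤ 2 * n - 8)
  have hlin := (concaveOn_id (convex_Ici (0 : ℝ))).smul (sq_nonneg n)
  refine (((hcubic.add hquad).sub hlin).add_const (n ^ 2)).congr fun p _ ↦ ?_
  simp only [cubicG, Pi.add_apply, Pi.sub_apply, id, smul_eq_mul]

theorem cubicG_div_sub_two_pos {n : ℝ} (hn : 2 < n) : 0 < cubicG n (n / (n - 2)) := by
  have hn2 : 0 < n - 2 := sub_pos.2 hn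
  have hval : cubicG n (n / (n - 2)) = 8 * n ^ 2 / (n - 2) ^ 3 := by
    unfold cubicG
    field_simp
    ring
  rw [hval]
  have : 0 < n := by linarith
  positivity

theorem cubicG_two_sub_two_div_neg {n : ℝ} (hn : 8 ≤ n) : cubicG n ((2 * n - 2) / n) < 0 := by
  have hn0 : 0 < n := by linarith
  have hval : cubicG n ((2 * n - 2) / n) =
      -((n - 2) * (n ^ 3 * (n - 8) + 8 * (3 * n - 2))) / n ^ 3 := by
    unfold cubicG
    field_simp
    ring
  rw [hval]
  refine div_neg_of_neg_of_pos (neg_neg_of_pos (mul_pos (by linarith) ?_)) (by positivity)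
  have : 0 ≤ n ^ 3 * (n - 8) := mul_nonneg (by positivity) (by linarith)
  linarith

/-- For every integer `N ≥ 8`, the cubic `G_N(p) = 4p³ + (2N−8)p² − N²p + N²` has exactly one
root `p₀` in the open interval `(N/(N−2), (2N−2)/N)`, and within that interval `G_N(p) < 0`
precisely for `p₀ < p`. -/
theorem stmt_0 (N : ℕ) (hN : 8 ≤ N) :
    ∃ p₀ ∈ Set.Ioo ((N : ℝ) / (N - 2)) ((2 * N - 2) / N),
      (∀ p ∈ Set.Ioo ((N : ℝ) / (N - 2)) ((2 * N - 2) / N),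
        (4 * p ^ 3 + (2 * N - 8) * p ^ 2 - N ^ 2 * p + N ^ 2 = 0 ↔ p = p₀)) ∧
      (∀ p ∈ Set.Ioo ((N : ℝ) / (N - 2)) ((2 * N - 2) / N),
        (4 * p ^ 3 + (2 * N - 8) * p ^ 2 - N ^ 2 * p + N ^ 2 < 0 ↔ p₀ < p)) := by
  have hn : (8 : ℝ) ≤ N := by exact_mod_cast hN
  have hn2 : (0 : ℝ) < N - 2 := by linarith
  have hleft : (0 : ℝ) ≤ N / (N - 2) := div_nonneg (by linarith) hn2.le
  have hab : (N : ℝ) / (N - 2) < (2 * N - 2) / N := by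
    rw [div_lt_div_iff₀ hn2 (by linarith)]
    nlinarith
  have hconv : ConvexOn ℝ (Icc ((N : ℝ) / (N - 2)) ((2 * N - 2) / N)) (cubicG N) :=
    (convexOn_cubicG (by linarith)).subset (Icc_subset_Ici_self.trans (Ici_subset_Ici.2 hleft))
      (convex_Icc _ _)
  exact hconv.exists_zero_Ioo_neg_iff_lt (continuous_cubicG N).continuousOn hab.le
    (cubicG_div_sub_two_pos (by linarith)) (cubicG_two_sub_two_div_neg hn)
end

section
/- For N = 6 and N = 7, the polynomial G_N(p) = 4p³ + (2N−8)p² − N²p + N² is strictly positive for all p in the closed interval [N/(N−2), (2N−2)/N]. -/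
/-!
For `p > 0` the cubic `G_N` is convex, so it lies above each of its tangent lines; explicitly
`G_N(p) = G_N(c) + G_N'(c) (p - c) + (p - c)² (4 (p + 2c) + 2N - 8)`.
For `N = 6` the tangent at the left endpoint `3/2` has value `9/2` and positive slope.
For `N = 7` the minimum of `G_7` lies inside `[7/5, 12/7]`; the tangent at `8/5`, with value
`293/125` and slope `23/25`, is still positive at `7/5` and increasing beyond.
-/

namespace CubicG

def G (N p : ℝ) : ℝ := 4 * p ^ 3 + (2 * N - 8) * p ^ 2 - N ^ 2 * p + N ^ 2

def G' (N p : ℝ) : ℝ := 12 * p ^ 2 + 2 * (2 * N - 8) * p - N ^ 2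

theorem G_eq_tangent_add (N c p : ℝ) :
    G N p = G N c + G' N c * (p - c) + (p - c) ^ 2 * (4 * (p + 2 * c) + 2 * N - 8) := by
  unfold G G'
  ring

theorem G_pos_of_tangent_pos {N c p : ℝ} (hconv : 0 ≤ 4 * (p + 2 * c) + 2 * N - 8)
    (htangent : 0 < G N c + G' N c * (p - c)) : 0 < G N p := by
  rw [G_eq_tangent_add N c p]
  have := mul_nonneg (sq_nonneg (p - c)) hconv
  linarith

theorem G_six_pos {p : ℝ} (hp : 3 / 2 ≤ p) : 0 < G 6 p := by
  apply G_pos_of_tangent_pos (c := 3 / 2) <;> norm_num [G, G'] <;> linarith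

theorem G_seven_pos {p : ℝ} (hp : 7 / 5 ≤ p) : 0 < G 7 p := by
  apply G_pos_of_tangent_pos (c := 8 / 5) <;> norm_num [G, G'] <;> linarith

end CubicG

/-- For `N = 6` and `N = 7`, the polynomial `G_N(p) = 4p³ + (2N−8)p² − N²p + N²` is strictly
positive on the closed interval `[N/(N−2), (2N−2)/N]`. -/
theorem stmt_2 :
    (∀ p ∈ Set.Icc ((6 : ℝ) / (6 - 2)) ((2 * 6 - 2) / 6),
      0 < 4 * p ^ 3 + (2 * 6 - 8) * p ^ 2 - (6 : ℝ) ^ 2 * p + (6 : ℝ) ^ 2) ∧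
    (∀ p ∈ Set.Icc ((7 : ℝ) / (7 - 2)) ((2 * 7 - 2) / 7),
      0 < 4 * p ^ 3 + (2 * 7 - 8) * p ^ 2 - (7 : ℝ) ^ 2 * p + (7 : ℝ) ^ 2) := by
  refine ⟨fun p hp => CubicG.G_six_pos ?_, fun p hp => CubicG.G_seven_pos ?_⟩
  · linarith [hp.1, show (6 : ℝ) / (6 - 2) = 3 / 2 by norm_num]
  · linarith [hp.1, show (7 : ℝ) / (7 - 2) = 7 / 5 by norm_num]
end
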